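/- Let X be a finite set and let A be an abelian 2-orbit-closed subgroup of Sym(X) with at least two orbits on X. Then for every orbit O of A, A_O^* equals the intersection over all orbits Q ≠ O of the subgroups A_O^Q; that is, a permutation of O is the restriction of some element of A fixing X∖O pointwise if and only if, for every orbit Q ≠ O, it is the restriction of some element of A fixing Q pointwise. -/

import Mathlib

/-!
Let `O` be the orbit of `x`. The permutation `σ` that acts as `a` on `O` and fixes everything
else is 2-orbit-compatible with `A`: on `O ∪ Q` it agrees with the element of `A` given for `Q`,
and on a union of two orbits other than `O` it agrees with `1`. Since `A` is 2-orbit-closed,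
`σ ∈ A`. The converse holds because distinct orbits are disjoint.
-/

/-- The orbit of a point `x` under a set `G` of permutations of `X`. -/
def orbitOf {X : Type*} (G : Set (Equiv.Perm X)) (x : X) : Set X :=
  {y | ∃ a ∈ G, a x = y}

/-- A permutation `σ` is 2-orbit-compatible with `G` if for every pair of orbits
`O` and `Q` of `G` there is an element of `G` agreeing with `σ` on `O ∪ Q`. -/
def TwoOrbitCompatible {X : Type*} (G : Set (Equiv.Perm X)) (σ : Equiv.Perm X) : Prop :=
  ∀ x y : X, ∃ a ∈ G, ∀ z ∈ orbitOf G x ∪ orbitOf G y, σ z = a z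

/-- A subgroup `A ≤ Sym(X)` is 2-orbit-closed if every permutation that is
2-orbit-compatible with `A` belongs to `A`. -/
def TwoOrbitClosed {X : Type*} (A : Subgroup (Equiv.Perm X)) : Prop :=
  ∀ σ : Equiv.Perm X, TwoOrbitCompatible (A : Set (Equiv.Perm X)) σ → σ ∈ A

section Orbits

variable {X : Type*} {A : Subgroup (Equiv.Perm X)}

lemma orbitOf_eq_of_mem {x z : X} (hz : z ∈ orbitOf (A : Set (Equiv.Perm X)) x) :
    orbitOf (A : Set (Equiv.Perm X)) z = orbitOf (A : Set (Equiv.Perm X)) x := by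
  obtain ⟨c, hc, rfl⟩ := hz
  ext w
  constructor
  · rintro ⟨d, hd, rfl⟩
    exact ⟨d * c, A.mul_mem hd hc, rfl⟩
  · rintro ⟨d, hd, rfl⟩
    exact ⟨d * c⁻¹, A.mul_mem hd (A.inv_mem hc), by simp⟩

lemma notMem_orbitOf_of_ne {x y z : X}
    (hne : orbitOf (A : Set (Equiv.Perm X)) y ≠ orbitOf (A : Set (Equiv.Perm X)) x)
    (hz : z ∈ orbitOf (A : Set (Equiv.Perm X)) y) :
    z ∉ orbitOf (A : Set (Equiv.Perm X)) x := fun hz' =>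
  hne ((orbitOf_eq_of_mem hz).symm.trans (orbitOf_eq_of_mem hz'))

lemma apply_mem_orbitOf_iff {a : Equiv.Perm X} (ha : a ∈ A) (x z : X) :
    a z ∈ orbitOf (A : Set (Equiv.Perm X)) x ↔ z ∈ orbitOf (A : Set (Equiv.Perm X)) x := by
  constructor
  · rintro ⟨c, hc, hcx⟩
    exact ⟨a⁻¹ * c, A.mul_mem (A.inv_mem ha) hc, by simp [hcx]⟩
  · rintro ⟨c, hc, rfl⟩
    exact ⟨a * c, A.mul_mem ha hc, rfl⟩

lemma exists_eqOn_orbitOf_and_fixes_compl {a : Equiv.Perm X} (ha : a ∈ A) (x : X) :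
    ∃ σ : Equiv.Perm X, Set.EqOn σ a (orbitOf (A : Set (Equiv.Perm X)) x) ∧
      ∀ z ∉ orbitOf (A : Set (Equiv.Perm X)) x, σ z = z := by
  classical
  exact ⟨Equiv.Perm.ofSubtype (a.subtypePerm (apply_mem_orbitOf_iff ha x)),
    fun _ hz => Equiv.Perm.ofSubtype_subtypePerm_of_mem _ hz,
    fun _ hz => Equiv.Perm.ofSubtype_subtypePerm_of_not_mem _ hz⟩

lemma TwoOrbitClosed.mem_of_fixes_compl (hclosed : TwoOrbitClosed A) {σ : Equiv.Perm X}
    {x : X} (hfix : ∀ z ∉ orbitOf (A : Set (Equiv.Perm X)) x, σ z = z)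
    (hpair : ∀ w, ∃ b ∈ A, Set.EqOn σ b
      (orbitOf (A : Set (Equiv.Perm X)) x ∪ orbitOf (A : Set (Equiv.Perm X)) w)) :
    σ ∈ A := by
  refine hclosed σ fun u v => ?_
  by_cases hu : orbitOf (A : Set (Equiv.Perm X)) u = orbitOf (A : Set (Equiv.Perm X)) x
  · rw [hu]
    exact hpair v
  by_cases hv : orbitOf (A : Set (Equiv.Perm X)) v = orbitOf (A : Set (Equiv.Perm X)) x
  · rw [hv, Set.union_comm]
    exact hpair u
  refine ⟨1, A.one_mem, ?_⟩
  rintro z (hz | hz)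
  · exact hfix z (notMem_orbitOf_of_ne hu hz)
  · exact hfix z (notMem_orbitOf_of_ne hv hz)

end Orbits

theorem statement11 (X : Type*) (A : Subgroup (Equiv.Perm X))
    (hclosed : TwoOrbitClosed A)
    (x : X) (a : Equiv.Perm X) (ha : a ∈ A) :
    (∃ b ∈ A, (∀ z ∈ orbitOf (A : Set (Equiv.Perm X)) x, b z = a z) ∧
        ∀ z ∉ orbitOf (A : Set (Equiv.Perm X)) x, b z = z) ↔
      ∀ y : X, orbitOf (A : Set (Equiv.Perm X)) y ≠ orbitOf (A : Set (Equiv.Perm X)) x →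
        ∃ b ∈ A, (∀ z ∈ orbitOf (A : Set (Equiv.Perm X)) x, b z = a z) ∧
          ∀ z ∈ orbitOf (A : Set (Equiv.Perm X)) y, b z = z := by
  constructor
  · rintro ⟨b, hb, hbO, hbfix⟩ y hy
    exact ⟨b, hb, hbO, fun z hz => hbfix z (notMem_orbitOf_of_ne hy hz)⟩
  intro h
  obtain ⟨σ, hσO, hσfix⟩ := exists_eqOn_orbitOf_and_fixes_compl ha x
  refine ⟨σ, hclosed.mem_of_fixes_compl hσfix fun w => ?_, hσO, hσfix⟩
  by_cases hw : orbitOf (A : Set (Equiv.Perm X)) w = orbitOf (A : Set (Equiv.Perm X)) x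
  · rw [hw, Set.union_self]
    exact ⟨a, ha, hσO⟩
  obtain ⟨b, hb, hbO, hbfix⟩ := h w hw
  refine ⟨b, hb, ?_⟩
  rintro z (hz | hz)
  · rw [hσO hz, hbO z hz]
  · rw [hσfix z (notMem_orbitOf_of_ne hw hz), hbfix z hz]
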